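/- arXiv:2402.13997 — 2 statements merged into one kernel-verified Lean document; each statement's English description precedes it below -/
import Mathlib

section
/- For any real numbers x ≥ y ≥ 10, Σ_{d > x, P(d) ≤ y} 1/d ≪ (log y)³ / x^{1/log y}, where the sum is over positive integers d > x all of whose prime factors are at most y and the implied constant is absolute. -/
open Real Filter Finset

open scoped Classical

/-!
Rankin's trick: for `d > x` and `σ ≥ 0` we have `1 / d ≤ d ^ (σ - 1) / x ^ σ`, so the sum is at
most `x ^ (-σ) ∏_{p ≤ y} (1 - p ^ (σ - 1))⁻¹` by the Euler product over `y`-smooth numbers.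
Take `σ = 1 / log y`. Then `p ^ σ ≤ e` for `p ≤ y`, so `p ^ (σ - 1) ≤ (1 + 2 σ log p) / p`, and the
logarithm of the product is at most `∑_{p ≤ y} 1/p + 2 σ ∑_{p ≤ y} log p / p + O(1)`. Chebyshev's
bound `θ(t) ≤ t log 4` and partial summation give `∑_{p ≤ y} 1/p ≤ log 4 · log log y + O(1)` and
`∑_{p ≤ y} log p / p = O(log y)`, so the product is `O((log y) ^ log 4)`, and `log 4 ≤ 3`.
-/

lemma sum_Icc_mul_le_of_sum_Icc_le {a f : ℕ → ℝ} {C : ℝ} {m N : ℕ} (hmN : m ≤ N)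
    (ha : ∀ n, m ≤ n → ∑ k ∈ Icc m n, a k ≤ C * n) (hf : AntitoneOn f (Set.Ici m))
    (hf0 : ∀ n, m ≤ n → 0 ≤ f n) :
    ∑ k ∈ Icc m N, a k * f k ≤ C * (m * f m + ∑ k ∈ Ioc m N, f k) := by
  -- Abel summation: the remainder `(C N - ∑ a) f N ≥ 0` is carried through the induction.
  suffices key : ∑ k ∈ Icc m N, a k * f k + (C * N - ∑ k ∈ Icc m N, a k) * f N ≤
      C * (m * f m + ∑ k ∈ Ioc m N, f k) by
    have : 0 ≤ (C * N - ∑ k ∈ Icc m N, a k) * f N :=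
      mul_nonneg (sub_nonneg.2 (ha N hmN)) (hf0 N hmN)
    linarith
  induction N, hmN using Nat.le_induction with
  | base =>
    simp only [Icc_self, sum_singleton, Ioc_self, sum_empty]
    exact le_of_eq (by ring)
  | succ N hmN ih =>
    have hfN : f (N + 1) ≤ f N := hf (Set.mem_Ici.2 hmN) (Set.mem_Ici.2 (by omega)) (by omega)
    have hgap : 0 ≤ C * N - ∑ k ∈ Icc m N, a k := sub_nonneg.2 (ha N hmN)
    rw [sum_Icc_succ_top (by omega), sum_Icc_succ_top (by omega), sum_Ioc_succ_top hmN]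
    push_cast
    nlinarith [mul_le_mul_of_nonneg_left hfN hgap]

lemma primesLE_eq_filter_Icc {m : ℕ} (hm : m ≤ 2) (n : ℕ) :
    Nat.primesLE n = {p ∈ Icc m n | p.Prime} := by
  ext p
  simp only [Nat.mem_primesLE, mem_filter, mem_Icc]
  exact ⟨fun ⟨hpn, hp⟩ ↦ ⟨⟨hm.trans hp.two_le, hpn⟩, hp⟩, fun ⟨⟨_, hpn⟩, hp⟩ ↦ ⟨hpn, hp⟩⟩

lemma sum_primesLE_log_mul_le {f : ℕ → ℝ} {m N : ℕ} (hm : m ≤ 2) (hmN : m ≤ N)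
    (hf : AntitoneOn f (Set.Ici m)) (hf0 : ∀ n, m ≤ n → 0 ≤ f n) :
    ∑ p ∈ Nat.primesLE N, log p * f p ≤ log 4 * (m * f m + ∑ k ∈ Ioc m N, f k) := by
  have hsum (n : ℕ) (g : ℕ → ℝ) :
      ∑ p ∈ Nat.primesLE n, g p = ∑ k ∈ Icc m n, if k.Prime then g k else 0 := by
    rw [primesLE_eq_filter_Icc hm, sum_filter]
  have htheta (n : ℕ) : ∑ k ∈ Icc m n, (if k.Prime then log k else 0) ≤ log 4 * n := by
    rw [← hsum, ← Chebyshev.theta_eq_sum_primesLE_log]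
    exact Chebyshev.theta_le_log4_mul_x (Nat.cast_nonneg n)
  calc ∑ p ∈ Nat.primesLE N, log p * f p
      = ∑ k ∈ Icc m N, (if k.Prime then log k else 0) * f k := by
        simp only [hsum, ite_mul, zero_mul]
    _ ≤ log 4 * (m * f m + ∑ k ∈ Ioc m N, f k) :=
        sum_Icc_mul_le_of_sum_Icc_le hmN (fun n _ ↦ htheta n) hf hf0

lemma sum_primesLE_log_div_le {N : ℕ} (hN : 1 ≤ N) :
    ∑ p ∈ Nat.primesLE N, log p / p ≤ log 4 * (1 + log N) := by
  have hf : AntitoneOn (fun n : ℕ ↦ 1 / (n : ℝ)) (Set.Ici 1) := by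
    intro a ha b _ hab
    simp only [Set.mem_Ici] at ha
    exact one_div_le_one_div_of_le (by exact_mod_cast ha) (by exact_mod_cast hab)
  calc ∑ p ∈ Nat.primesLE N, log p / p = ∑ p ∈ Nat.primesLE N, log p * (1 / (p : ℝ)) := by
        simp only [mul_one_div]
    _ ≤ log 4 * ((1 : ℕ) * (1 / ((1 : ℕ) : ℝ)) + ∑ k ∈ Ioc 1 N, 1 / (k : ℝ)) :=
        sum_primesLE_log_mul_le (by norm_num) hN hf (fun n _ ↦ by positivity)
    _ = log 4 * harmonic N := by
        rw [harmonic_eq_sum_Icc, ← add_sum_Ioc_eq_sum_Icc hN]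
        push_cast
        simp
    _ ≤ log 4 * (1 + log N) :=
        mul_le_mul_of_nonneg_left (harmonic_le_one_add_log N) (log_nonneg (by norm_num))

lemma inv_mul_log_le_log_log_sub {x : ℝ} (hx : 2 ≤ x) :
    1 / ((x + 1) * log (x + 1)) ≤ log (log (x + 1)) - log (log x) := by
  have hlx : 0 < log x := log_pos (by linarith)
  have hlx1 : 0 < log (x + 1) := log_pos (by linarith)
  have hgap : 1 / (x + 1) ≤ log (x + 1) - log x := by
    have := one_sub_inv_le_log_of_pos (x := (x + 1) / x) (by positivity)
    rw [log_div (by positivity) (by positivity), inv_div] at this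
    have h : 1 - x / (x + 1) = 1 / (x + 1) := by field_simp; ring
    linarith
  have := one_sub_inv_le_log_of_pos (x := log (x + 1) / log x) (by positivity)
  rw [log_div hlx1.ne' hlx.ne', inv_div] at this
  calc 1 / ((x + 1) * log (x + 1)) = 1 / (x + 1) / log (x + 1) := by rw [div_div]
    _ ≤ (log (x + 1) - log x) / log (x + 1) := by gcongr
    _ = 1 - log x / log (x + 1) := by field_simp
    _ ≤ log (log (x + 1)) - log (log x) := this

lemma sum_Ioc_inv_mul_log_le {N : ℕ} (hN : 2 ≤ N) :
    ∑ k ∈ Ioc 2 N, 1 / ((k : ℝ) * log k) ≤ log (log N) - log (log 2) := by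
  induction N, hN using Nat.le_induction with
  | base => simp
  | succ N hN ih =>
    rw [sum_Ioc_succ_top hN]
    have := inv_mul_log_le_log_log_sub (x := N) (by exact_mod_cast hN)
    push_cast
    linarith

lemma sum_primesLE_inv_le {N : ℕ} (hN : 2 ≤ N) :
    ∑ p ∈ Nat.primesLE N, 1 / (p : ℝ) ≤ log 4 * (log (log N) + 2) := by
  set f : ℕ → ℝ := fun n ↦ 1 / (n * log n)
  have hf : AntitoneOn f (Set.Ici 2) := by
    intro a ha b _ hab
    have ha : (2 : ℝ) ≤ a := by exact_mod_cast ha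
    have hab : (a : ℝ) ≤ b := by exact_mod_cast hab
    have hla : 0 < log a := log_pos (by linarith)
    exact one_div_le_one_div_of_le (by positivity)
      (mul_le_mul hab (log_le_log (by linarith) hab) hla.le (by linarith))
  have hf0 (n : ℕ) (hn : 2 ≤ n) : 0 ≤ f n := by
    have hn : (2 : ℝ) ≤ n := by exact_mod_cast hn
    have := log_pos (by linarith : (1 : ℝ) < n)
    positivity
  have hl2 : 2 / 3 < log 2 := by linarith [log_two_gt_d9]
  have hll2 : 1 - 1 / log 2 ≤ log (log 2) := by
    simpa [one_div] using one_sub_inv_le_log_of_pos (log_pos one_lt_two)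
  have hf2 : (2 : ℕ) * f 2 = 1 / log 2 := by
    simp only [f]; push_cast; field_simp
  calc ∑ p ∈ Nat.primesLE N, 1 / (p : ℝ) = ∑ p ∈ Nat.primesLE N, log p * f p := by
        refine sum_congr rfl fun p hp ↦ ?_
        have := log_pos (by exact_mod_cast (Nat.prime_of_mem_primesLE hp).one_lt : (1 : ℝ) < p)
        simp only [f]
        field_simp
    _ ≤ log 4 * ((2 : ℕ) * f 2 + ∑ k ∈ Ioc 2 N, f k) :=
        sum_primesLE_log_mul_le le_rfl hN hf hf0
    _ ≤ log 4 * (log (log N) + 2) := by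
        refine mul_le_mul_of_nonneg_left ?_ (log_nonneg (by norm_num))
        have := sum_Ioc_inv_mul_log_le hN
        have : 1 / log 2 ≤ 3 / 2 := by rw [div_le_iff₀ (by linarith)]; linarith
        simp only [f] at hf2 ⊢
        linarith

lemma sum_primesLE_inv_sq_le (N : ℕ) : ∑ p ∈ Nat.primesLE N, 1 / (p : ℝ) ^ 2 ≤ 1 := by
  simp only [one_div]
  calc ∑ p ∈ Nat.primesLE N, ((p : ℝ) ^ 2)⁻¹ ≤ ∑ k ∈ Ioo 1 (N + 1), ((k : ℝ) ^ 2)⁻¹ := by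
        refine sum_le_sum_of_subset_of_nonneg (fun p hp ↦ ?_) fun _ _ _ ↦ by positivity
        have := Nat.mem_primesLE.1 hp
        exact mem_Ioo.2 ⟨this.2.one_lt, by omega⟩
    _ ≤ 2 / ((1 : ℕ) + 1) := sum_Ioo_inv_sq_le 1 (N + 1)
    _ = 1 := by norm_num

lemma inv_one_sub_le_one_add {t : ℝ} (h1 : t ≤ 3 / 4) :
    (1 - t)⁻¹ ≤ 1 + (t + 4 * t ^ 2) := by
  -- `(1 - t) (1 + t + 4 t²) = 1 + t² (3 - 4 t)`
  rw [inv_le_iff_one_le_mul₀ (by linarith)]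
  nlinarith

lemma rpow_sub_one_le {p σ : ℝ} (hp : 1 ≤ p) (hσ : 0 ≤ σ) (hσp : σ * log p ≤ 1) :
    p ^ (σ - 1) ≤ (1 + 2 * (σ * log p)) / p := by
  have hp0 : 0 < p := by linarith
  have hu : 0 ≤ σ * log p := mul_nonneg hσ (log_nonneg hp)
  have hexp : exp (σ * log p) ≤ 1 + 2 * (σ * log p) := by
    have := abs_exp_sub_one_le (x := σ * log p) (by rwa [abs_of_nonneg hu])
    rw [abs_of_nonneg hu, abs_le] at this
    linarith [this.2]
  rw [rpow_sub hp0, rpow_one, rpow_def_of_pos hp0, mul_comm (log p)]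
  gcongr

lemma rpow_sub_one_le_three_quarters {p σ : ℝ} (hp : 2 ≤ p) (hσ : σ ≤ 1 / 2) :
    p ^ (σ - 1) ≤ 3 / 4 := by
  have hp0 : 0 < p := by linarith
  have hsq : (p ^ (σ - 1)) ^ 2 ≤ 1 / 2 := by
    rw [← rpow_natCast, ← rpow_mul hp0.le]
    calc p ^ ((σ - 1) * (2 : ℕ)) ≤ p ^ (-1 : ℝ) :=
          rpow_le_rpow_of_exponent_le (by linarith) (by push_cast; linarith)
      _ ≤ 1 / 2 := by rw [rpow_neg_one, one_div]; gcongr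
  nlinarith [rpow_nonneg hp0.le (σ - 1)]

lemma inv_one_sub_rpow_le {p σ : ℝ} (hp : 2 ≤ p) (hσ0 : 0 ≤ σ) (hσ : σ ≤ 1 / 2)
    (hσp : σ * log p ≤ 1) :
    (1 - p ^ (σ - 1))⁻¹ ≤ 1 + (1 / p + 2 * σ * (log p / p) + 36 / p ^ 2) := by
  have hp0 : 0 < p := by linarith
  set t := p ^ (σ - 1)
  have ht0 : 0 ≤ t := rpow_nonneg hp0.le _
  have ht : t ≤ (1 + 2 * (σ * log p)) / p := rpow_sub_one_le (by linarith) hσ0 hσp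
  have ht3 : t ≤ 3 / p := ht.trans (by gcongr; linarith)
  have ht2 : 4 * t ^ 2 ≤ 36 / p ^ 2 := by
    calc 4 * t ^ 2 ≤ 4 * (3 / p) ^ 2 := by gcongr
      _ = 36 / p ^ 2 := by ring
  calc (1 - t)⁻¹ ≤ 1 + (t + 4 * t ^ 2) :=
        inv_one_sub_le_one_add (rpow_sub_one_le_three_quarters hp hσ)
    _ ≤ 1 + (1 / p + 2 * σ * (log p / p) + 36 / p ^ 2) := by
        have : (1 + 2 * (σ * log p)) / p = 1 / p + 2 * σ * (log p / p) := by ring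
        linarith

lemma prod_primesLE_inv_one_sub_rpow_le {σ : ℝ} (hσ0 : 0 ≤ σ) (hσ : σ ≤ 1 / 2) {N : ℕ}
    (hN : 3 ≤ N) (hσN : σ * log N ≤ 1) :
    ∏ p ∈ Nat.primesLE N, (1 - (p : ℝ) ^ (σ - 1))⁻¹ ≤ exp 43 * log N ^ 3 := by
  set g : ℕ → ℝ := fun p ↦ 1 / p + 2 * σ * (log p / p) + 36 / (p : ℝ) ^ 2
  have hfactor (p : ℕ) (hp : p ∈ Nat.primesLE N) :
      0 ≤ (1 - (p : ℝ) ^ (σ - 1))⁻¹ ∧ (1 - (p : ℝ) ^ (σ - 1))⁻¹ ≤ 1 + g p := by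
    have hp2 : (2 : ℝ) ≤ p := by exact_mod_cast Nat.two_le_of_mem_primesLE hp
    have hσp : σ * log p ≤ 1 := le_trans (by gcongr; exact_mod_cast Nat.le_of_mem_primesLE hp) hσN
    have := rpow_sub_one_le_three_quarters hp2 hσ
    exact ⟨inv_nonneg.2 (by linarith), inv_one_sub_rpow_le hp2 hσ0 hσ hσp⟩
  have hlogN : 1 ≤ log N := by
    have : (3 : ℝ) ≤ N := by exact_mod_cast hN
    rw [le_log_iff_exp_le (by positivity)]
    linarith [exp_one_lt_d9]
  have hL : log 4 < 7 / 5 := by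
    rw [show (4 : ℝ) = 2 ^ 2 by norm_num, log_pow]
    push_cast
    linarith [log_two_lt_d9]
  -- `43 ≥ 2 log 4 + 3 log 4 + 36`, from the three prime sums
  have hsum : ∑ p ∈ Nat.primesLE N, g p ≤ 3 * log (log N) + 43 := by
    have h1 := sum_primesLE_inv_le (N := N) (by omega)
    have h2 := sum_primesLE_log_div_le (N := N) (by omega)
    have h3 := sum_primesLE_inv_sq_le N
    have hL0 : 0 ≤ log 4 := log_nonneg (by norm_num)
    have hLL : log 4 * log (log N) ≤ 3 * log (log N) := by
      gcongr
      · exact log_nonneg hlogN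
      · linarith
    have h2' : 2 * σ * ∑ p ∈ Nat.primesLE N, log p / p ≤ 2 * log 4 * (3 / 2) := by
      calc 2 * σ * ∑ p ∈ Nat.primesLE N, log p / p ≤ 2 * σ * (log 4 * (1 + log N)) := by gcongr
        _ = 2 * log 4 * (σ + σ * log N) := by ring
        _ ≤ 2 * log 4 * (3 / 2) := by gcongr; linarith
    simp only [g, sum_add_distrib, ← mul_sum, div_eq_mul_one_div (36 : ℝ)]
    nlinarith
  calc ∏ p ∈ Nat.primesLE N, (1 - (p : ℝ) ^ (σ - 1))⁻¹ ≤ ∏ p ∈ Nat.primesLE N, (1 + g p) :=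
        prod_le_prod (fun p hp ↦ (hfactor p hp).1) fun p hp ↦ (hfactor p hp).2
    _ ≤ exp (∑ p ∈ Nat.primesLE N, g p) := prod_one_add_le_exp_sum _ fun p ↦ by positivity
    _ ≤ exp (3 * log (log N) + 43) := exp_le_exp.2 hsum
    _ = exp 43 * log N ^ 3 := by
        rw [exp_add, mul_comm 3, ← rpow_def_of_pos (by positivity), rpow_ofNat, mul_comm]

noncomputable def natRpowHom (c : ℝ) : ℕ →* ℝ where
  toFun n := (n : ℝ) ^ c
  map_one' := by simp
  map_mul' m n := by
    push_cast
    exact mul_rpow (Nat.cast_nonneg m) (Nat.cast_nonneg n)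

lemma hasSum_indicator_smoothNumbers_rpow {σ : ℝ} (hσ : σ < 1) (n : ℕ) :
    HasSum (n.smoothNumbers.indicator fun d : ℕ ↦ (d : ℝ) ^ (σ - 1))
      (∏ p ∈ n.primesBelow, (1 - (p : ℝ) ^ (σ - 1))⁻¹) := by
  have hnorm {p : ℕ} (hp : p.Prime) : ‖natRpowHom (σ - 1) p‖ < 1 := by
    have hp1 : (1 : ℝ) < p := by exact_mod_cast hp.one_lt
    change ‖(p : ℝ) ^ (σ - 1)‖ < 1
    rw [norm_of_nonneg (rpow_nonneg (Nat.cast_nonneg p) _)]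
    exact rpow_lt_one_of_one_lt_of_neg hp1 (by linarith)
  rw [← hasSum_subtype_iff_indicator]
  exact (EulerProduct.summable_and_hasSum_smoothNumbers_prod_primesBelow_geometric hnorm n).2

lemma mem_smoothNumbers_floor_add_one_iff {y : ℝ} (hy : 0 ≤ y) {d : ℕ} (hd : d ≠ 0) :
    d ∈ (⌊y⌋₊ + 1).smoothNumbers ↔ ∀ p ∈ d.primeFactors, (p : ℝ) ≤ y := by
  simp only [Nat.mem_smoothNumbers_iff_primeFactors_subset, hd, ne_eq, not_false_eq_true,
    true_and, subset_iff, Nat.mem_primesBelow, Nat.lt_add_one_iff, Nat.le_floor_iff hy]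
  exact forall₂_congr fun p hp ↦ and_iff_left (Nat.prime_of_mem_primeFactors hp)

lemma tsum_one_div_gt_of_primeFactors_le {x y σ : ℝ} (hx : 0 < x) (hy : 0 ≤ y) (hσ0 : 0 ≤ σ)
    (hσ1 : σ < 1) :
    ∑' d : ℕ, (if x < d ∧ ∀ p ∈ d.primeFactors, (p : ℝ) ≤ y then 1 / (d : ℝ) else 0) ≤
      (∏ p ∈ Nat.primesLE ⌊y⌋₊, (1 - (p : ℝ) ^ (σ - 1))⁻¹) / x ^ σ := by
  set I := (⌊y⌋₊ + 1).smoothNumbers.indicator fun d : ℕ ↦ (d : ℝ) ^ (σ - 1)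
  have hI := (hasSum_indicator_smoothNumbers_rpow hσ1 (⌊y⌋₊ + 1)).div_const (x ^ σ)
  have hterm (d : ℕ) :
      (if x < d ∧ ∀ p ∈ d.primeFactors, (p : ℝ) ≤ y then 1 / (d : ℝ) else 0) ≤ I d / x ^ σ := by
    split_ifs with hd
    · obtain ⟨hxd, hsmooth⟩ := hd
      have hd0 : (0 : ℝ) < d := hx.trans hxd
      rw [← mem_smoothNumbers_floor_add_one_iff hy (by exact_mod_cast hd0.ne')] at hsmooth
      rw [show I d = (d : ℝ) ^ (σ - 1) from Set.indicator_of_mem hsmooth _, rpow_sub hd0, rpow_one,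
        div_right_comm]
      gcongr
      rw [one_le_div₀ (rpow_pos_of_pos hx σ)]
      exact rpow_le_rpow hx.le hxd.le hσ0
    · have : 0 ≤ I d := Set.indicator_nonneg (fun d _ ↦ rpow_nonneg (Nat.cast_nonneg d) _) d
      positivity
  have hsummable : Summable fun d : ℕ ↦
      (if x < d ∧ ∀ p ∈ d.primeFactors, (p : ℝ) ≤ y then 1 / (d : ℝ) else 0) :=
    .of_nonneg_of_le (fun d ↦ by positivity) hterm hI.summable
  exact hasSum_le hterm hsummable.hasSum hI

lemma two_le_log_of_ten_le {z : ℝ} (hz : 10 ≤ z) : 2 ≤ log z := by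
  rw [le_log_iff_exp_le (by linarith), show (2 : ℝ) = 1 + 1 by norm_num, exp_add]
  nlinarith [exp_one_lt_d9, exp_pos 1]

theorem stmt3 :
    ∃ C > 0, ∀ x y : ℝ, 10 ≤ y → y ≤ x →
      (∑' d : ℕ, if x < (d : ℝ) ∧ ∀ p ∈ Nat.primeFactors d, (p : ℝ) ≤ y then 1 / (d : ℝ) else 0) ≤
        C * Real.log y ^ 3 / x ^ (1 / Real.log y) := by
  refine ⟨exp 43, exp_pos 43, fun x y hy hxy ↦ ?_⟩
  have hx : 0 < x := by linarith
  have hN : 3 ≤ ⌊y⌋₊ := Nat.le_floor (by norm_num; linarith)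
  have hN1 : (1 : ℝ) ≤ ⌊y⌋₊ := Nat.one_le_cast.2 (by omega)
  have hlogN : log ⌊y⌋₊ ≤ log y := log_le_log (by linarith) (Nat.floor_le (by linarith))
  have hlogy := two_le_log_of_ten_le hy
  have hσN : 1 / log y * log ⌊y⌋₊ ≤ 1 := by
    rwa [one_div_mul_eq_div, div_le_one (by linarith)]
  calc _ ≤ (∏ p ∈ Nat.primesLE ⌊y⌋₊, (1 - (p : ℝ) ^ (1 / log y - 1))⁻¹) / x ^ (1 / log y) :=
        tsum_one_div_gt_of_primeFactors_le hx (by linarith) (by positivity)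
          (by rw [div_lt_one (by linarith)]; linarith)
    _ ≤ exp 43 * log ⌊y⌋₊ ^ 3 / x ^ (1 / log y) := by
        gcongr
        exact prod_primesLE_inv_one_sub_rpow_le (by positivity)
          (one_div_le_one_div_of_le (by norm_num) hlogy) hN hσN
    _ ≤ exp 43 * log y ^ 3 / x ^ (1 / log y) := by gcongr
end

section
/- Define α(d) = ∏_{p|d}(1 − 1/(p−1)) and α₁(d) = Σ_{p|d} 1/(p−1), and let p(d) denote the smallest prime factor of d. If K ≥ 1 and d is a squarefree odd integer with d > 1 and ω(d) ≤ K, then |1 − α(d) − α₁(d)| ≤ 4e^K / p(d)². -/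
open Real Filter Finset

/-- `α(d) = ∏_{p ∣ d} (1 - 1/(p-1))`. -/
noncomputable def alphaFn (d : ℕ) : ℝ := ∏ p ∈ d.primeFactors, (1 - 1 / ((p : ℝ) - 1))

/-- `α₁(d) = ∑_{p ∣ d} 1/(p-1)`. -/
noncomputable def alphaOne (d : ℕ) : ℝ := ∑ p ∈ d.primeFactors, 1 / ((p : ℝ) - 1)

/-!
With `x_p = 1/(p-1) ∈ [0, 1]` and `S = α₁(d) = ∑ x_p`, the truncated inclusion–exclusion
(Bonferroni) inequalities `1 - S ≤ ∏ (1 - x_p) ≤ 1 - S + S²/2` give `|1 - α(d) - α₁(d)| ≤ S²/2`.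
Since `1/(p-1) ≤ 2/p ≤ 2/p(d)`, we have `S ≤ 2K/p(d)`, and `K²/2 ≤ e^K` finishes.
-/

section Bonferroni

variable {ι : Type*} (s : Finset ι) {f : ι → ℝ}

theorem Finset.one_sub_sum_le_prod_one_sub (h0 : ∀ i ∈ s, 0 ≤ f i) (h1 : ∀ i ∈ s, f i ≤ 1) :
    1 - ∑ i ∈ s, f i ≤ ∏ i ∈ s, (1 - f i) := by
  classical
  induction s using Finset.induction_on with
  | empty => simp
  | insert a s ha ih =>
    rw [sum_insert ha, prod_insert ha]
    have hf0 := h0 a (mem_insert_self a s)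
    have hf1 := h1 a (mem_insert_self a s)
    have ih := ih (fun i hi ↦ h0 i (mem_insert_of_mem hi)) (fun i hi ↦ h1 i (mem_insert_of_mem hi))
    have hs0 : 0 ≤ ∑ i ∈ s, f i := sum_nonneg fun i hi ↦ h0 i (mem_insert_of_mem hi)
    nlinarith [mul_nonneg hf0 hs0]

theorem Finset.prod_one_sub_le_one_sub_sum_add_sq_div_two (h0 : ∀ i ∈ s, 0 ≤ f i)
    (h1 : ∀ i ∈ s, f i ≤ 1) :
    ∏ i ∈ s, (1 - f i) ≤ 1 - ∑ i ∈ s, f i + (∑ i ∈ s, f i) ^ 2 / 2 := by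
  classical
  induction s using Finset.induction_on with
  | empty => simp
  | insert a s ha ih =>
    rw [sum_insert ha, prod_insert ha]
    have hf0 := h0 a (mem_insert_self a s)
    have hf1 := h1 a (mem_insert_self a s)
    have ih := ih (fun i hi ↦ h0 i (mem_insert_of_mem hi)) (fun i hi ↦ h1 i (mem_insert_of_mem hi))
    have hs0 : 0 ≤ ∑ i ∈ s, f i := sum_nonneg fun i hi ↦ h0 i (mem_insert_of_mem hi)
    nlinarith [mul_le_mul_of_nonneg_left ih (sub_nonneg.2 hf1), mul_nonneg hf0 (sq_nonneg (∑ i ∈ s, f i))]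

end Bonferroni

lemma one_div_sub_one_nonneg {p : ℕ} (hp : p.Prime) : 0 ≤ 1 / ((p : ℝ) - 1) := by
  have : (2 : ℝ) ≤ p := by exact_mod_cast hp.two_le
  exact one_div_nonneg.2 (by linarith)

lemma one_div_sub_one_le_one {p : ℕ} (hp : p.Prime) : 1 / ((p : ℝ) - 1) ≤ 1 := by
  have : (2 : ℝ) ≤ p := by exact_mod_cast hp.two_le
  rw [div_le_one (by linarith)]
  linarith

lemma one_div_sub_one_le_two_div_minFac {d p : ℕ} (hp : p ∈ d.primeFactors) :
    1 / ((p : ℝ) - 1) ≤ 2 / d.minFac := by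
  have hp2 := (Nat.prime_of_mem_primeFactors hp).two_le
  have hqp : (d.minFac : ℝ) ≤ p := by
    exact_mod_cast Nat.minFac_le_of_dvd hp2 (Nat.dvd_of_mem_primeFactors hp)
  have hq : (0 : ℝ) < d.minFac := by exact_mod_cast d.minFac_pos
  have : (2 : ℝ) ≤ p := by exact_mod_cast hp2
  rw [div_le_div_iff₀ (by linarith) hq]
  linarith

lemma alphaOne_nonneg (d : ℕ) : 0 ≤ alphaOne d :=
  sum_nonneg fun _ hp ↦ one_div_sub_one_nonneg (Nat.prime_of_mem_primeFactors hp)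

lemma alphaOne_le_two_mul_card_div_minFac (d : ℕ) :
    alphaOne d ≤ 2 * d.primeFactors.card / d.minFac := by
  calc alphaOne d ≤ ∑ _p ∈ d.primeFactors, 2 / (d.minFac : ℝ) :=
        sum_le_sum fun _ hp ↦ one_div_sub_one_le_two_div_minFac hp
    _ = 2 * d.primeFactors.card / d.minFac := by rw [sum_const, nsmul_eq_mul]; ring

lemma abs_one_sub_alphaFn_sub_alphaOne_le (d : ℕ) :
    |1 - alphaFn d - alphaOne d| ≤ alphaOne d ^ 2 / 2 := by
  have h0 : ∀ p ∈ d.primeFactors, 0 ≤ 1 / ((p : ℝ) - 1) :=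
    fun _ hp ↦ one_div_sub_one_nonneg (Nat.prime_of_mem_primeFactors hp)
  have h1 : ∀ p ∈ d.primeFactors, 1 / ((p : ℝ) - 1) ≤ 1 :=
    fun _ hp ↦ one_div_sub_one_le_one (Nat.prime_of_mem_primeFactors hp)
  have hlower := d.primeFactors.one_sub_sum_le_prod_one_sub h0 h1
  have hupper := d.primeFactors.prod_one_sub_le_one_sub_sum_add_sq_div_two h0 h1
  rw [← alphaFn, ← alphaOne] at hlower hupper
  rw [abs_le]
  constructor <;> nlinarith [sq_nonneg (alphaOne d)]

theorem stmt9_general (K : ℕ) (d : ℕ) (hω : d.primeFactors.card ≤ K) :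
    |1 - alphaFn d - alphaOne d| ≤ 4 * Real.exp K / (d.minFac : ℝ) ^ 2 := by
  have hS : alphaOne d ≤ 2 * K / d.minFac :=
    (alphaOne_le_two_mul_card_div_minFac d).trans (by gcongr)
  have hK : (K : ℝ) ^ 2 / 2 ≤ Real.exp K := by
    simpa using Real.pow_div_factorial_le_exp (K : ℝ) (Nat.cast_nonneg K) 2
  calc |1 - alphaFn d - alphaOne d| ≤ alphaOne d ^ 2 / 2 := abs_one_sub_alphaFn_sub_alphaOne_le d
    _ ≤ (2 * K / d.minFac) ^ 2 / 2 := by gcongr; exact alphaOne_nonneg d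
    _ = 4 * ((K : ℝ) ^ 2 / 2) / (d.minFac : ℝ) ^ 2 := by ring
    _ ≤ 4 * Real.exp K / (d.minFac : ℝ) ^ 2 := by gcongr

theorem stmt9 (K : ℕ) (hK : 1 ≤ K) (d : ℕ) (hsq : Squarefree d) (hodd : Odd d)
    (hd : 1 < d) (hω : d.primeFactors.card ≤ K) :
    |1 - alphaFn d - alphaOne d| ≤ 4 * Real.exp K / (d.minFac : ℝ) ^ 2 :=
  stmt9_general K d hω
end
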